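/- arXiv:2307.02402 — 3 statements merged into one kernel-verified Lean document; each statement's English description precedes it below -/
import Mathlib

section
/- The Hungarian algorithm (bipartite matching) is a particular case of optimal transport: if one adds a dummy background ground truth with mass (N_p - N_g)/N_p and constant matching cost c_∅, then the optimal transport plan between the uniform distribution α on N_p predictions and the distribution β on N_g+1 ground truths takes values in {0, 1/N_p}, and the set σ(j) = {i : P_{i,j} = 1/N_p} for j ≤ N_g defines an injective assignment of ground truths to predictions that minimizes the total bipartite matching cost. -/
/-!
If `σ` is an optimal injection, the plan with mass `1 / Np` on each pair `(σ j, j)` and on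
`(i, ∅)` for every unmatched prediction `i` is feasible, takes values in `{0, 1 / Np}` and costs
`(∑ j, C (σ j) j + (Np - Ng) c∅) / Np`. Conversely, splitting the background column of a feasible
plan into `Np - Ng` columns and scaling by `Np` gives a doubly stochastic matrix. By Birkhoff's
theorem its cost dominates that of a permutation matrix, i.e. of an injection together with
`Np - Ng` background assignments, hence is at least the cost of the plan built from `σ`.
-/

open Finset

theorem exists_perm_sum_le_of_mem_doublyStochastic {R n : Type*} [Field R] [LinearOrder R]
    [IsStrictOrderedRing R] [Fintype n] [DecidableEq n] {M : Matrix n n R}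
    (hM : M ∈ doublyStochastic R n) (D : Matrix n n R) :
    ∃ π : Equiv.Perm n, ∑ a, D a (π a) ≤ ∑ a, ∑ b, M a b * D a b := by
  let cost : Matrix n n R →ₗ[R] R :=
    { toFun := fun M => ∑ a, ∑ b, M a b * D a b
      map_add' := fun _ _ => by simp only [Matrix.add_apply, add_mul, sum_add_distrib]
      map_smul' := fun _ _ => by simp only [Matrix.smul_apply, smul_eq_mul, mul_sum, mul_assoc,
        RingHom.id_apply] }
  rw [← SetLike.mem_coe, doublyStochastic_eq_convexHull_permMatrix] at hM
  obtain ⟨_, ⟨π, rfl⟩, hπ⟩ :=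
    (cost.concaveOn convex_univ).exists_le_of_mem_convexHull (Set.subset_univ _) hM
  refine ⟨π, le_of_eq_of_le ?_ hπ⟩
  simp [cost, Equiv.Perm.permMatrix, PEquiv.toMatrix_apply, eq_comm]

theorem natCast_mul_div_natCast_mul_of_sum_eq {ι : Type*} [Fintype ι] {q : ι → ℝ} {k : ℕ} {a : ℝ}
    (hq : ∀ i, 0 ≤ q i) (hsum : ∑ i, q i = k * a) (i : ι) : k * (q i / (k * a)) = q i / a := by
  rcases eq_or_ne k 0 with rfl | hk
  · have hqi : q i = 0 := by
      rw [Nat.cast_zero, zero_mul] at hsum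
      exact (sum_eq_zero_iff_of_nonneg fun j _ => hq j).1 hsum i (mem_univ i)
    simp [hqi]
  · have hk : (k : ℝ) ≠ 0 := Nat.cast_ne_zero.2 hk
    rw [mul_comm (k : ℝ) a, ← div_div, mul_div_cancel₀ _ hk]

section MatchingPlan

variable {ι : Type*} [DecidableEq ι] {n : ℕ}

def matchingPlan (σ : Fin n → ι) (a : ℝ) (i : ι) : Fin (n + 1) → ℝ :=
  Fin.lastCases (if i ∈ univ.image σ then 0 else a) fun j => if σ j = i then a else 0

variable {σ : Fin n → ι} {a : ℝ}

@[simp]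
theorem matchingPlan_castSucc (i : ι) (j : Fin n) :
    matchingPlan σ a i j.castSucc = if σ j = i then a else 0 := by
  simp [matchingPlan]

@[simp]
theorem matchingPlan_last (i : ι) :
    matchingPlan σ a i (Fin.last n) = if i ∈ univ.image σ then 0 else a := by
  simp [matchingPlan]

theorem matchingPlan_eq_zero_or_eq (i : ι) (j : Fin (n + 1)) :
    matchingPlan σ a i j = 0 ∨ matchingPlan σ a i j = a := by
  induction j using Fin.lastCases <;> simp only [matchingPlan_castSucc, matchingPlan_last] <;>
    split_ifs <;> simp

theorem matchingPlan_nonneg (ha : 0 ≤ a) (i : ι) (j : Fin (n + 1)) : 0 ≤ matchingPlan σ a i j := by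
  rcases matchingPlan_eq_zero_or_eq (σ := σ) (a := a) i j with h | h <;> rw [h]
  exact ha

theorem matchingPlan_castSucc_eq_iff (ha : a ≠ 0) (j : Fin n) (i : ι) :
    matchingPlan σ a i j.castSucc = a ↔ i = σ j := by
  rw [matchingPlan_castSucc, eq_comm (a := i)]
  split_ifs with h <;> simp [h, ha.symm]

theorem sum_matchingPlan (hσ : σ.Injective) (i : ι) : ∑ j, matchingPlan σ a i j = a := by
  rw [Fin.sum_univ_castSucc]
  by_cases hi : i ∈ univ.image σ
  · obtain ⟨j₀, -, rfl⟩ := mem_image.1 hi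
    simp [hσ.eq_iff]
  · simp only [mem_image, mem_univ, true_and, not_exists] at hi
    simp [hi]

variable [Fintype ι]

theorem sum_matchingPlan_castSucc (j : Fin n) : ∑ i, matchingPlan σ a i j.castSucc = a := by
  simp

theorem sum_matchingPlan_last (hσ : σ.Injective) :
    ∑ i, matchingPlan σ a i (Fin.last n) = (Fintype.card ι - n : ℕ) * a := by
  simp only [matchingPlan_last, sum_ite, sum_const_zero, zero_add, sum_const, nsmul_eq_mul,
    filter_not, filter_mem_eq_inter, univ_inter]
  rw [card_univ_sdiff, card_image_of_injective _ hσ, card_univ, Fintype.card_fin]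

theorem sum_matchingPlan_mul (hσ : σ.Injective) (C : ι → Fin (n + 1) → ℝ) {c₀ : ℝ}
    (hbg : ∀ i, C i (Fin.last n) = c₀) :
    ∑ i, ∑ j, matchingPlan σ a i j * C i j =
      a * (∑ j, C (σ j) j.castSucc + (Fintype.card ι - n : ℕ) * c₀) := by
  rw [sum_comm, Fin.sum_univ_castSucc]
  simp only [hbg, ← sum_mul, sum_matchingPlan_last hσ, matchingPlan_castSucc, ite_mul, zero_mul,
    sum_ite_eq, mem_univ, if_true, mul_add, mul_sum]
  ring

end MatchingPlan

section BlowUp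

variable {ι : Type*} {n k : ℕ} (e : Fin n ⊕ Fin k ≃ ι)

noncomputable def blowUpPlan (a : ℝ) (Q : ι → Fin (n + 1) → ℝ) :
    Matrix (Fin n ⊕ Fin k) (Fin n ⊕ Fin k) ℝ :=
  fun x => Sum.elim (fun j => Q (e x) j.castSucc / a) fun _ => Q (e x) (Fin.last n) / (k * a)

def blowUpCost (C : ι → Fin (n + 1) → ℝ) (c₀ : ℝ) : Matrix (Fin n ⊕ Fin k) (Fin n ⊕ Fin k) ℝ :=
  fun x => Sum.elim (fun j => C (e x) j.castSucc) fun _ => c₀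

theorem sum_blowUpCost_perm (C : ι → Fin (n + 1) → ℝ) (c₀ : ℝ) (π : Equiv.Perm (Fin n ⊕ Fin k)) :
    ∑ x, blowUpCost e C c₀ x (π x) = ∑ j, C (e (π.symm (.inl j))) j.castSucc + k * c₀ := by
  rw [← π.symm.sum_comp, Fintype.sum_sum_type]
  simp [blowUpCost]

variable [Fintype ι] {e} {a : ℝ} {Q : ι → Fin (n + 1) → ℝ}

theorem blowUpPlan_mem_doublyStochastic (ha : 0 < a) (hQ : ∀ i j, 0 ≤ Q i j)
    (hrow : ∀ i, ∑ j, Q i j = a) (hcol : ∀ j : Fin n, ∑ i, Q i j.castSucc = a)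
    (hlast : ∑ i, Q i (Fin.last n) = k * a) :
    blowUpPlan e a Q ∈ doublyStochastic ℝ (Fin n ⊕ Fin k) := by
  refine mem_doublyStochastic_iff_sum.2 ⟨?_, fun x => ?_, ?_⟩
  · rintro x (j | t) <;> exact div_nonneg (hQ _ _) (by positivity)
  · simp only [blowUpPlan, Fintype.sum_sum_type, Sum.elim_inl, Sum.elim_inr, sum_const, card_univ,
      Fintype.card_fin, nsmul_eq_mul,
      natCast_mul_div_natCast_mul_of_sum_eq (fun i => hQ i _) hlast, ← sum_div, ← add_div]
    rw [← Fin.sum_univ_castSucc (f := Q (e x)), hrow, div_self ha.ne']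
  · rintro (j | t)
    · simp only [blowUpPlan, Sum.elim_inl, ← sum_div, e.sum_comp (fun i => Q i j.castSucc), hcol,
        div_self ha.ne']
    · have hk : (k : ℝ) * a ≠ 0 := mul_ne_zero (Nat.cast_ne_zero.2 t.pos.ne') ha.ne'
      simp only [blowUpPlan, Sum.elim_inr, ← sum_div, e.sum_comp (fun i => Q i (Fin.last n)), hlast,
        div_self hk]

theorem sum_blowUpPlan_mul_blowUpCost (hQ : ∀ i j, 0 ≤ Q i j)
    (hlast : ∑ i, Q i (Fin.last n) = k * a) (C : ι → Fin (n + 1) → ℝ) {c₀ : ℝ}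
    (hbg : ∀ i, C i (Fin.last n) = c₀) :
    ∑ x, ∑ y, blowUpPlan e a Q x y * blowUpCost e C c₀ x y = (∑ i, ∑ j, Q i j * C i j) / a := by
  rw [← e.sum_comp, sum_div]
  refine sum_congr rfl fun x _ => ?_
  simp only [blowUpPlan, blowUpCost, Fintype.sum_sum_type, Sum.elim_inl, Sum.elim_inr, sum_const,
    card_univ, Fintype.card_fin, nsmul_eq_mul, ← mul_assoc,
    natCast_mul_div_natCast_mul_of_sum_eq (fun i => hQ i _) hlast, Fin.sum_univ_castSucc, hbg]
  rw [add_div, sum_div]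
  simp only [div_mul_eq_mul_div]

end BlowUp

theorem exists_injective_sum_le_of_transportPlan {ι : Type*} [Fintype ι] {n k : ℕ}
    (e : Fin n ⊕ Fin k ≃ ι) {a : ℝ} (ha : 0 < a) {Q : ι → Fin (n + 1) → ℝ}
    (hQ : ∀ i j, 0 ≤ Q i j) (hrow : ∀ i, ∑ j, Q i j = a)
    (hcol : ∀ j : Fin n, ∑ i, Q i j.castSucc = a) (hlast : ∑ i, Q i (Fin.last n) = k * a)
    (C : ι → Fin (n + 1) → ℝ) {c₀ : ℝ} (hbg : ∀ i, C i (Fin.last n) = c₀) :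
    ∃ τ : Fin n → ι, τ.Injective ∧
      a * (∑ j, C (τ j) j.castSucc + k * c₀) ≤ ∑ i, ∑ j, Q i j * C i j := by
  obtain ⟨π, hπ⟩ := exists_perm_sum_le_of_mem_doublyStochastic
    (blowUpPlan_mem_doublyStochastic (e := e) ha hQ hrow hcol hlast) (blowUpCost e C c₀)
  rw [sum_blowUpCost_perm, sum_blowUpPlan_mul_blowUpCost hQ hlast C hbg, le_div_iff₀ ha] at hπ
  exact ⟨fun j => e (π.symm (.inl j)), e.injective.comp (π.symm.injective.comp Sum.inl_injective),
    by linarith⟩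

/-- The Hungarian algorithm (bipartite matching) as a particular case of optimal transport:
there is an optimal transport plan for the augmented problem (with a background column of
constant cost `c∅` and marginals `α = 1/Np` uniform, `β j = 1/Np` for `j ≤ Ng`,
`β (Ng+1) = (Np - Ng)/Np`) taking values in `{0, 1/Np}`, whose nonzero entries in the first
`Ng` columns define an injective assignment `σ` of ground truths to predictions minimizing
the total bipartite matching cost. -/
theorem hungarian_is_particular_case_of_OT
    (Np Ng : ℕ) (hNp : 0 < Np) (hNg : Ng ≤ Np)
    (C : Fin Np → Fin (Ng + 1) → ℝ) (c0 : ℝ)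
    (hbg : ∀ i, C i (Fin.last Ng) = c0)
    (β : Fin (Ng + 1) → ℝ)
    (hβ : ∀ j : Fin Ng, β j.castSucc = 1 / Np)
    (hβbg : β (Fin.last Ng) = (Np - Ng : ℝ) / Np)
    (U : Set (Fin Np → Fin (Ng + 1) → ℝ))
    (hU : U = {P : Fin Np → Fin (Ng + 1) → ℝ | (∀ i j, 0 ≤ P i j) ∧ (∀ i, ∑ j, P i j = 1 / Np) ∧
      (∀ j, ∑ i, P i j = β j)}) :
    ∃ P ∈ U,
      (∀ Q ∈ U, ∑ i, ∑ j, P i j * C i j ≤ ∑ i, ∑ j, Q i j * C i j) ∧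
      (∀ i j, P i j = 0 ∨ P i j = 1 / Np) ∧
      ∃ σ : Fin Ng → Fin Np, Function.Injective σ ∧
        (∀ j : Fin Ng, ∀ i, P i j.castSucc = 1 / Np ↔ i = σ j) ∧
        (∀ τ : Fin Ng → Fin Np, Function.Injective τ →
          ∑ j : Fin Ng, C (σ j) j.castSucc ≤ ∑ j : Fin Ng, C (τ j) j.castSucc) := by
  subst hU
  obtain ⟨σ, hσ, hσmin⟩ := Set.exists_min_image {τ : Fin Ng → Fin Np | τ.Injective}
    (fun τ => ∑ j, C (τ j) j.castSucc) (Set.toFinite _) ⟨_, Fin.castLE_injective hNg⟩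
  have ha : (0 : ℝ) < 1 / Np := by positivity
  have hbgMass : ((Np - Ng : ℕ) : ℝ) * (1 / Np) = (Np - Ng : ℝ) / Np := by
    rw [Nat.cast_sub hNg, mul_one_div]
  refine ⟨matchingPlan σ (1 / Np), ⟨matchingPlan_nonneg ha.le, sum_matchingPlan hσ, ?_⟩, ?_,
    matchingPlan_eq_zero_or_eq, σ, hσ, matchingPlan_castSucc_eq_iff ha.ne', hσmin⟩
  · refine Fin.lastCases ?_ fun j => ?_
    · rw [sum_matchingPlan_last hσ, Fintype.card_fin, hbgMass, hβbg]
    · rw [sum_matchingPlan_castSucc, hβ]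
  · rintro Q ⟨hQ, hrow, hcol⟩
    obtain ⟨τ, hτ, hQτ⟩ := exists_injective_sum_le_of_transportPlan
      (finSumFinEquiv.trans (finCongr (Nat.add_sub_cancel' hNg))) ha hQ hrow
      (fun j => (hcol _).trans (hβ j)) (by rw [hcol, hβbg, hbgMass]) C hbg
    rw [sum_matchingPlan_mul hσ C hbg, Fintype.card_fin]
    exact le_trans (by gcongr ?_ * (?_ + _); exact hσmin τ hτ) hQτ
end

section
/- The minimum of the optimal transport cost over the transport polytope U(α,β) (with the augmented cost matrix including a constant-cost background column) equals (1/N_p) times the minimum bipartite matching cost plus (N_p - N_g)·c_∅/N_p. -/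
/-!
A feasible plan `P` is `1 / Np` times a saturating fractional matching `Q` of the real columns
(nonnegative, row sums `≤ 1`, column sums `1`) completed by a slack column carrying each row's
deficit; the background column then always costs `(Np - Ng) c∅ / Np`. Conversely every such `Q`
gives a plan, and an injection gives an integral `Q`. To bound the cost of `Q` below by the
optimal matching cost, spread the row deficits evenly over `Np - Ng` new columns: this makes `Q`
doubly stochastic, so by Birkhoff's theorem its cost is a convex combination of costs of
permutations, each of which restricts to an injection `Fin Ng → Fin Np`.
-/

open Finset

section FractionalMatching

variable {ι κ : Type*} [Fintype ι] [Fintype κ]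

structure IsSaturatingFractionalMatching (Q : ι → κ → ℝ) : Prop where
  nonneg : ∀ i j, 0 ≤ Q i j
  sum_row_le_one : ∀ i, ∑ j, Q i j ≤ 1
  sum_col_eq_one : ∀ j, ∑ i, Q i j = 1

variable [DecidableEq ι]

def matchingMatrix (σ : κ → ι) : ι → κ → ℝ := fun i j => if σ j = i then 1 else 0

theorem isSaturatingFractionalMatching_matchingMatrix {σ : κ → ι} (hσ : σ.Injective) :
    IsSaturatingFractionalMatching (matchingMatrix σ) := by
  refine ⟨fun i j => by unfold matchingMatrix; split_ifs <;> norm_num, fun i => ?_, fun j => ?_⟩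
  · simp only [matchingMatrix, sum_boole]
    exact_mod_cast card_le_one.mpr fun a ha b hb => hσ (by simp_all)
  · simp [matchingMatrix]

theorem sum_matchingMatrix_mul (σ : κ → ι) (D : ι → κ → ℝ) :
    ∑ i, ∑ j, matchingMatrix σ i j * D i j = ∑ j, D (σ j) j := by
  rw [sum_comm]
  simp [matchingMatrix]

end FractionalMatching

section Birkhoff

variable {n : Type*} [Fintype n] [DecidableEq n]

theorem sum_permMatrix_mul (σ : Equiv.Perm n) (D : Matrix n n ℝ) :
    ∑ i, ∑ k, σ.permMatrix ℝ i k * D i k = ∑ i, D i (σ i) := by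
  simp [Equiv.Perm.permMatrix, PEquiv.toMatrix_apply, Equiv.toPEquiv_apply]

theorem le_sum_mul_of_mem_doublyStochastic {M D : Matrix n n ℝ} {m : ℝ}
    (hM : M ∈ doublyStochastic ℝ n) (hD : ∀ σ : Equiv.Perm n, m ≤ ∑ i, D i (σ i)) :
    m ≤ ∑ i, ∑ k, M i k * D i k := by
  have hlin : IsLinearMap ℝ fun A : Matrix n n ℝ => ∑ i, ∑ k, A i k * D i k :=
    ⟨fun A B => by simp [add_mul, sum_add_distrib],
      fun c A => by simp [mul_sum, mul_assoc]⟩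
  rw [← SetLike.mem_coe, doublyStochastic_eq_convexHull_permMatrix] at hM
  refine convexHull_min ?_ (convex_halfSpace_ge hlin m) hM
  rintro _ ⟨σ, rfl⟩
  simpa [sum_permMatrix_mul] using hD σ

end Birkhoff

theorem IsSaturatingFractionalMatching.exists_mem_doublyStochastic {k l : ℕ}
    {Q : Fin (k + l) → Fin k → ℝ} (hQ : IsSaturatingFractionalMatching Q) :
    ∃ M ∈ doublyStochastic ℝ (Fin (k + l)), ∀ i j, M i (Fin.castAdd l j) = Q i j := by
  let r : Fin (k + l) → ℝ := fun i => 1 - ∑ j, Q i j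
  have hr0 : ∀ i, 0 ≤ r i := fun i => sub_nonneg.2 (hQ.sum_row_le_one i)
  have hr_sum : ∑ i, r i = l := by
    simp only [r, sum_sub_distrib, sum_comm (f := fun i j => Q i j), hQ.sum_col_eq_one]
    simp
  have hr_spread : ∀ i, (l : ℝ) * (r i / l) = r i := by
    intro i
    rcases eq_or_ne l 0 with rfl | hl
    -- with no new columns the deficits must vanish
    · simpa using ((sum_eq_zero_iff_of_nonneg fun i _ => hr0 i).1 (by simpa using hr_sum) i
        (mem_univ i)).symm
    · exact mul_div_cancel₀ _ (by exact_mod_cast hl)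
  refine ⟨fun i => Fin.addCases (Q i) fun _ => r i / l,
    mem_doublyStochastic_iff_sum.2 ⟨fun i k => ?_, fun i => ?_, fun k => ?_⟩,
    fun i j => Fin.addCases_left j⟩
  · induction k using Fin.addCases <;> simp [hQ.nonneg, div_nonneg (hr0 i)]
  · simp only [Fin.sum_univ_add, Fin.addCases_left, Fin.addCases_right, sum_const, card_univ,
      Fintype.card_fin, nsmul_eq_mul, hr_spread, r]
    ring
  · induction k using Fin.addCases with
    | left j => simp [hQ.sum_col_eq_one]
    | right t =>
      have hl : (l : ℝ) ≠ 0 := by exact_mod_cast (Fin.pos t).ne'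
      simp [← sum_div, hr_sum, hl]

theorem IsSaturatingFractionalMatching.le_sum_mul {n k : ℕ} (hk : k ≤ n)
    {Q D : Fin n → Fin k → ℝ} (hQ : IsSaturatingFractionalMatching Q) {m : ℝ}
    (hm : ∀ σ : Fin k → Fin n, σ.Injective → m ≤ ∑ j, D (σ j) j) :
    m ≤ ∑ i, ∑ j, Q i j * D i j := by
  obtain ⟨l, rfl⟩ := Nat.exists_eq_add_of_le hk
  obtain ⟨M, hM, hMQ⟩ := hQ.exists_mem_doublyStochastic
  let D' : Matrix (Fin (k + l)) (Fin (k + l)) ℝ := fun i => Fin.addCases (D i) 0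
  have hcost : ∑ i, ∑ k', M i k' * D' i k' = ∑ i, ∑ j, Q i j * D i j := by
    simp [D', Fin.sum_univ_add, hMQ]
  rw [← hcost]
  refine le_sum_mul_of_mem_doublyStochastic hM fun σ => ?_
  calc m ≤ ∑ j, D (σ.symm (Fin.castAdd l j)) j :=
        hm _ (σ.symm.injective.comp (Fin.castAdd_injective k l))
    _ = ∑ i, D' i (σ i) := by
      rw [← σ.symm.sum_comp]
      simp [D', Fin.sum_univ_add]

section SlackColumn

variable {n k : ℕ}

def withSlackColumn (Q : Fin n → Fin k → ℝ) : Fin n → Fin (k + 1) → ℝ :=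
  fun i => Fin.lastCases (1 - ∑ j, Q i j) (Q i)

theorem sum_withSlackColumn (Q : Fin n → Fin k → ℝ) (i : Fin n) :
    ∑ j, withSlackColumn Q i j = 1 := by
  simp [withSlackColumn, Fin.sum_univ_castSucc]

namespace IsSaturatingFractionalMatching

variable {Q : Fin n → Fin k → ℝ}

theorem withSlackColumn_nonneg (hQ : IsSaturatingFractionalMatching Q) (i : Fin n)
    (j : Fin (k + 1)) : 0 ≤ withSlackColumn Q i j := by
  induction j using Fin.lastCases <;> simp [withSlackColumn, hQ.nonneg, hQ.sum_row_le_one]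

theorem sum_withSlackColumn_castSucc (hQ : IsSaturatingFractionalMatching Q) (j : Fin k) :
    ∑ i, withSlackColumn Q i j.castSucc = 1 := by
  simp [withSlackColumn, hQ.sum_col_eq_one]

theorem sum_withSlackColumn_last (hQ : IsSaturatingFractionalMatching Q) :
    ∑ i, withSlackColumn Q i (Fin.last k) = n - k := by
  simp [withSlackColumn, sum_sub_distrib, sum_comm (f := fun i j => Q i j), hQ.sum_col_eq_one]

end IsSaturatingFractionalMatching

theorem isSaturatingFractionalMatching_of_transport {P : Fin n → Fin (k + 1) → ℝ} (hn : 0 < n)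
    (hP0 : ∀ i j, 0 ≤ P i j) (hrow : ∀ i, ∑ j, P i j = 1 / n)
    (hcol : ∀ j : Fin k, ∑ i, P i j.castSucc = 1 / n) :
    IsSaturatingFractionalMatching fun i (j : Fin k) => n * P i j.castSucc := by
  have hn' : (n : ℝ) ≠ 0 := by positivity
  refine ⟨fun i j => mul_nonneg n.cast_nonneg (hP0 _ _), fun i => ?_, fun j => ?_⟩
  · have h := hrow i
    rw [Fin.sum_univ_castSucc] at h
    rw [← mul_sum, eq_sub_of_add_eq h, mul_sub, mul_one_div_cancel hn']
    exact sub_le_self _ (mul_nonneg n.cast_nonneg (hP0 _ _))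
  · rw [← mul_sum, hcol, mul_one_div_cancel hn']

theorem sum_mul_eq_of_last_eq (P C : Fin n → Fin (k + 1) → ℝ) {c : ℝ}
    (hC : ∀ i, C i (Fin.last k) = c) :
    ∑ i, ∑ j, P i j * C i j =
      ∑ i, ∑ j : Fin k, P i j.castSucc * C i j.castSucc + (∑ i, P i (Fin.last k)) * c := by
  simp [Fin.sum_univ_castSucc, hC, sum_add_distrib, sum_mul]

end SlackColumn

/-- The minimum of the OT cost over the transport polytope `U(α,β)` (augmented with a
constant-cost background column) equals `(1/Np)` times the minimum bipartite matching cost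
plus `(Np - Ng) * c∅ / Np`. -/
theorem OT_value_eq_bipartite_matching_value
    (Np Ng : ℕ) (hNp : 0 < Np) (hNg : Ng ≤ Np)
    (C : Fin Np → Fin (Ng + 1) → ℝ) (c0 : ℝ)
    (hbg : ∀ i, C i (Fin.last Ng) = c0)
    (β : Fin (Ng + 1) → ℝ)
    (hβ : ∀ j : Fin Ng, β j.castSucc = 1 / Np)
    (hβbg : β (Fin.last Ng) = (Np - Ng : ℝ) / Np)
    (m : ℝ)
    (hm : IsLeast {s : ℝ | ∃ σ : Fin Ng → Fin Np, Function.Injective σ ∧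
      s = ∑ j : Fin Ng, C (σ j) j.castSucc} m) :
    IsLeast {v : ℝ | ∃ P : Fin Np → Fin (Ng + 1) → ℝ,
        (∀ i j, 0 ≤ P i j) ∧ (∀ i, ∑ j, P i j = 1 / Np) ∧ (∀ j, ∑ i, P i j = β j) ∧
        v = ∑ i, ∑ j, P i j * C i j}
      ((1 / Np) * m + (Np - Ng : ℝ) * c0 / Np) := by
  obtain ⟨⟨σ₀, hσ₀, rfl⟩, hmin⟩ := hm
  have hNp' : (Np : ℝ) ≠ 0 := by positivity
  have hcost : ∀ P : Fin Np → Fin (Ng + 1) → ℝ, (∀ j, ∑ i, P i j = β j) →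
      ∑ i, ∑ j, P i j * C i j =
        1 / Np * ∑ i, ∑ j : Fin Ng, Np * P i j.castSucc * C i j.castSucc +
          (Np - Ng : ℝ) * c0 / Np := by
    intro P hcol
    rw [sum_mul_eq_of_last_eq P C hbg, hcol, hβbg]
    simp only [mul_sum]
    field_simp
  refine ⟨?_, ?_⟩
  · have hQ := isSaturatingFractionalMatching_matchingMatrix hσ₀
    let P i j := withSlackColumn (matchingMatrix σ₀) i j / Np
    have hPcol : ∀ j, ∑ i, P i j = β j := by
      intro j
      induction j using Fin.lastCases <;>
        simp [P, ← sum_div, hQ.sum_withSlackColumn_castSucc, hQ.sum_withSlackColumn_last, hβ,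
          hβbg]
    refine ⟨P, fun i j => div_nonneg (hQ.withSlackColumn_nonneg i j) Np.cast_nonneg,
      fun i => by simp [P, ← sum_div, sum_withSlackColumn], hPcol, ?_⟩
    rw [hcost P hPcol, ← sum_matchingMatrix_mul σ₀ fun i j => C i j.castSucc]
    simp [P, withSlackColumn, mul_div_cancel₀ _ hNp']
  · rintro _ ⟨P, hP0, hProw, hPcol, rfl⟩
    have hQ := isSaturatingFractionalMatching_of_transport hNp hP0 hProw
      fun j => (hPcol _).trans (hβ j)
    rw [hcost P hPcol]
    gcongr
    exact hQ.le_sum_mul hNg fun σ hσ => hmin ⟨σ, hσ, rfl⟩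
end

section
/- The transport polytope U(α,β) with α uniform 1/N_p on N_p predictions and β = (1/N_p,…,1/N_p,(N_p-N_g)/N_p) is a nonempty compact convex polytope, and its extreme points are exactly the matrices with entries in {0, 1/N_p} whose restrictions to the first N_g columns correspond to injections from ground truths to predictions. -/
/-!
Collapsing the columns `Ng, …, Np - 1` of an `Np × Np` doubly stochastic matrix into one
(via `k ↦ Fin.clamp k Ng`) and scaling by `1 / Np` maps the Birkhoff polytope linearly onto `U`;
it is onto because a point of `U` lifts back by spreading its last column evenly over the
collapsed ones. By Birkhoff's theorem `U` is therefore the convex hull of the images of the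
permutation matrices, which are exactly of the stated form. Conversely, the row constraints
confine `U` to the box `[0, 1/Np]^(Np × (Ng+1))`, whose vertices are the `{0, 1/Np}`-matrices,
so each such matrix in `U` is extreme.
-/

open Finset Pointwise

section TransportPolytope

variable {m n : Type*} [Fintype m] [Fintype n]

def transportPolytope (r : m → ℝ) (c : n → ℝ) : Set (Matrix m n ℝ) :=
  {P | (∀ i j, 0 ≤ P i j) ∧ (∀ i, ∑ j, P i j = r i) ∧ ∀ j, ∑ i, P i j = c j}

lemma smul_transportPolytope {a : ℝ} (ha : 0 < a) (r : m → ℝ) (c : n → ℝ) :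
    a • transportPolytope r c = transportPolytope (a • r) (a • c) := by
  ext P
  have hnonneg : ∀ x : ℝ, 0 ≤ a⁻¹ * x ↔ 0 ≤ x := fun x =>
    mul_nonneg_iff_of_pos_left (inv_pos.2 ha)
  simp only [Set.mem_smul_set_iff_inv_smul_mem₀ ha.ne', transportPolytope, Set.mem_ofPred_eq,
    Matrix.smul_apply, smul_eq_mul, Pi.smul_apply, ← mul_sum, inv_mul_eq_iff_eq_mul₀ ha.ne',
    hnonneg]

lemma doublyStochastic_eq_transportPolytope [DecidableEq n] :
    (doublyStochastic ℝ n : Set (Matrix n n ℝ)) = transportPolytope 1 1 := by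
  ext M
  simp [mem_doublyStochastic_iff_sum, transportPolytope]

lemma mem_Icc_of_mem_transportPolytope {r : m → ℝ} {c : n → ℝ} {P : Matrix m n ℝ}
    (hP : P ∈ transportPolytope r c) (i : m) (j : n) : P i j ∈ Set.Icc 0 (r i) :=
  ⟨hP.1 i j, hP.2.1 i ▸ single_le_sum (fun k _ => hP.1 i k) (mem_univ j)⟩

lemma mem_extremePoints_transportPolytope {r : m → ℝ} {c : n → ℝ} {P : Matrix m n ℝ}
    (hP : P ∈ transportPolytope r c) (hP0r : ∀ i j, P i j = 0 ∨ P i j = r i) :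
    P ∈ (transportPolytope r c).extremePoints ℝ := by
  have hbox : transportPolytope r c ⊆ Set.univ.pi fun i => Set.univ.pi fun _ => Set.Icc 0 (r i) :=
    fun Q hQ i _ j _ => mem_Icc_of_mem_transportPolytope hQ i j
  refine inter_extremePoints_subset_extremePoints_of_subset hbox ⟨hP, ?_⟩
  -- `extremePoints_pi` sees the box only as a set of functions, not of matrices.
  show P ∈ Set.extremePoints ℝ
    (Set.univ.pi fun i => Set.univ.pi fun _ => Set.Icc 0 (r i) : Set (m → n → ℝ))
  simp only [extremePoints_pi]
  intro i _ j _
  obtain ⟨h0P, hPr⟩ := mem_Icc_of_mem_transportPolytope hP i j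
  rw [Set.extremePoints_Icc (h0P.trans hPr)]
  exact hP0r i j

end TransportPolytope

section MergeColumns

variable {m n n' : Type*} [DecidableEq n']

def mergeMatrix (g : n → n') : Matrix n n' ℝ :=
  Matrix.of fun k j => if g k = j then 1 else 0

variable [Fintype n]

lemma mul_mergeMatrix_apply (M : Matrix m n ℝ) (g : n → n') (i : m) (j : n') :
    (M * mergeMatrix g) i j = ∑ k with g k = j, M i k := by
  simp [Matrix.mul_apply, mergeMatrix, sum_filter]

lemma smul_permMatrix_mul_mergeMatrix_apply [DecidableEq n] (a : ℝ) (σ : Equiv.Perm n)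
    (g : n → n') (i : n) (j : n') :
    (a • (σ.permMatrix ℝ * mergeMatrix g)) i j = if g (σ i) = j then a else 0 := by
  simp [Equiv.Perm.permMatrix, PEquiv.toMatrix_toPEquiv_mul, mergeMatrix]

noncomputable def splitColumns (g : n → n') (P : Matrix m n' ℝ) : Matrix m n ℝ :=
  Matrix.of fun i k => P i (g k) / #{k' | g k' = g k}

variable [Fintype m] [Fintype n']

lemma mul_mergeMatrix_mem_transportPolytope {r : m → ℝ} {c : n → ℝ} {M : Matrix m n ℝ}
    (hM : M ∈ transportPolytope r c) (g : n → n') :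
    M * mergeMatrix g ∈ transportPolytope r fun j => ∑ k with g k = j, c k := by
  obtain ⟨hM0, hMr, hMc⟩ := hM
  simp only [transportPolytope, Set.mem_ofPred_eq, mul_mergeMatrix_apply]
  refine ⟨fun i j => sum_nonneg fun k _ => hM0 i k, fun i => ?_, fun j => ?_⟩
  · rw [sum_fiberwise univ g (M i), hMr]
  · exact sum_comm.trans (sum_congr rfl fun k _ => hMc k)

lemma splitColumns_mul_mergeMatrix {r : m → ℝ} {g : n → n'} {P : Matrix m n' ℝ}
    (hP : P ∈ transportPolytope r fun j => (#{k | g k = j} : ℝ)) :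
    splitColumns g P * mergeMatrix g = P := by
  ext i j
  rw [mul_mergeMatrix_apply]
  obtain hempty | hne := eq_empty_or_nonempty {k | g k = j}
  · have hcol : ∑ i, P i j = 0 := by
      rw [hP.2.2]
      simp only [hempty, card_empty, Nat.cast_zero]
    rw [hempty, sum_empty, (sum_eq_zero_iff_of_nonneg fun i _ => hP.1 i j).1 hcol i (mem_univ i)]
  · have hterm : ∀ k ∈ ({k | g k = j} : Finset n),
        splitColumns g P i k = P i j / #{k | g k = j} := fun k hk => by
      obtain rfl := (mem_filter.1 hk).2
      rfl
    rw [sum_congr rfl hterm, sum_const, nsmul_eq_mul,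
      mul_div_cancel₀ _ (Nat.cast_ne_zero.2 hne.card_pos.ne')]

lemma splitColumns_mem_transportPolytope {r : m → ℝ} {g : n → n'} {P : Matrix m n' ℝ}
    (hP : P ∈ transportPolytope r fun j => (#{k | g k = j} : ℝ)) :
    splitColumns g P ∈ transportPolytope r 1 := by
  obtain ⟨hP0, hPr, hPc⟩ := hP
  refine ⟨fun i k => div_nonneg (hP0 i (g k)) (Nat.cast_nonneg _), fun i => ?_, fun k => ?_⟩
  · rw [← sum_fiberwise univ g, ← hPr i]
    refine sum_congr rfl fun j _ => ?_
    rw [← mul_mergeMatrix_apply, splitColumns_mul_mergeMatrix ⟨hP0, hPr, hPc⟩]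
  · have hcard : (#{k' | g k' = g k} : ℝ) ≠ 0 :=
      Nat.cast_ne_zero.2 (card_ne_zero.2 ⟨k, mem_filter.2 ⟨mem_univ k, rfl⟩⟩)
    simp only [splitColumns, Matrix.of_apply, ← sum_div, hPc, Pi.one_apply, div_self hcard]

lemma image_mul_mergeMatrix_transportPolytope (r : m → ℝ) (g : n → n') :
    (fun M : Matrix m n ℝ => M * mergeMatrix g) '' transportPolytope r 1 =
      transportPolytope r fun j => (#{k | g k = j} : ℝ) := by
  refine Set.Subset.antisymm ?_ fun P hP =>
    ⟨splitColumns g P, splitColumns_mem_transportPolytope hP, splitColumns_mul_mergeMatrix hP⟩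
  rintro _ ⟨M, hM, rfl⟩
  simpa using mul_mergeMatrix_mem_transportPolytope hM g

lemma transportPolytope_eq_convexHull [DecidableEq n] {a : ℝ} (ha : 0 < a) (g : n → n') :
    transportPolytope (fun _ : n => a) (fun j => a * #{k | g k = j}) =
      convexHull ℝ (Set.range fun σ : Equiv.Perm n => a • (σ.permMatrix ℝ * mergeMatrix g)) := by
  let f := mulRightLinearMap n ℝ (mergeMatrix g)
  calc transportPolytope (fun _ : n => a) (fun j => a * #{k | g k = j})
      = a • transportPolytope 1 fun j => (#{k | g k = j} : ℝ) := by
        rw [smul_transportPolytope ha]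
        congr 1
        ext
        simp
    _ = a • (f '' doublyStochastic ℝ n) := by
        rw [doublyStochastic_eq_transportPolytope, ← image_mul_mergeMatrix_transportPolytope]
        rfl
    _ = a • convexHull ℝ (f '' {σ.permMatrix ℝ | σ : Equiv.Perm n}) := by
        rw [doublyStochastic_eq_convexHull_permMatrix, LinearMap.image_convexHull]
    _ = _ := by
        rw [← convexHull_smul]
        congr 1
        ext
        simp [Set.mem_smul_set, f]

end MergeColumns

section Clamp

variable {Np Ng : ℕ}

lemma clamp_eq_castSucc_iff (hNg : Ng ≤ Np) (k : Fin Np) (j : Fin Ng) :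
    Fin.clamp k Ng = j.castSucc ↔ k = Fin.castLE hNg j := by
  simp only [Fin.ext_iff, Fin.coe_clamp, Fin.val_castSucc, Fin.val_castLE]
  omega

lemma card_clamp_eq_castSucc (hNg : Ng ≤ Np) (j : Fin Ng) :
    #{k : Fin Np | Fin.clamp k Ng = j.castSucc} = 1 :=
  card_eq_one.2 ⟨Fin.castLE hNg j, by ext k; simp [clamp_eq_castSucc_iff hNg]⟩

lemma card_clamp_eq_last : #{k : Fin Np | Fin.clamp k Ng = Fin.last Ng} = Np - Ng := by
  rw [filter_congr (q := fun k : Fin Np => ¬ (k : ℕ) < Ng) fun k _ => by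
      simp only [Fin.ext_iff, Fin.coe_clamp, Fin.val_last]; omega,
    filter_not, card_sdiff_of_subset (filter_subset _ _), Fin.card_filter_val_lt, card_univ,
    Fintype.card_fin]
  omega

end Clamp

/-- The augmented transport polytope `U(α,β)` (uniform `α = 1/Np`, `β j = 1/Np` for
`j ≤ Ng`, `β (Ng+1) = (Np-Ng)/Np`) is a nonempty compact convex polytope, and its extreme
points are exactly the matrices with entries in `{0, 1/Np}` whose restriction to the first
`Ng` columns corresponds to an injection from ground truths to predictions. -/
theorem transport_polytope_extremePoints
    (Np Ng : ℕ) (hNp : 0 < Np) (hNg : Ng ≤ Np)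
    (β : Fin (Ng + 1) → ℝ)
    (hβ : ∀ j : Fin Ng, β j.castSucc = 1 / Np)
    (hβbg : β (Fin.last Ng) = (Np - Ng : ℝ) / Np)
    (U : Set (Fin Np → Fin (Ng + 1) → ℝ))
    (hU : U = {P : Fin Np → Fin (Ng + 1) → ℝ | (∀ i j, 0 ≤ P i j) ∧
      (∀ i, ∑ j, P i j = 1 / Np) ∧ (∀ j, ∑ i, P i j = β j)}) :
    U.Nonempty ∧ IsCompact U ∧ Convex ℝ U ∧
      U.extremePoints ℝ =
        {P | P ∈ U ∧ (∀ i j, P i j = 0 ∨ P i j = 1 / Np) ∧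
          ∃ σ : Fin Ng → Fin Np, Function.Injective σ ∧
            ∀ j : Fin Ng, ∀ i, P i j.castSucc ≠ 0 ↔ i = σ j} := by
  have ha : (0 : ℝ) < 1 / Np := by positivity
  have hUT : U = transportPolytope (fun _ => 1 / Np) β := hU
  have hβcard : β = fun j => (1 / Np : ℝ) * #{k : Fin Np | Fin.clamp k Ng = j} := by
    funext j
    induction j using Fin.lastCases with
    | last => rw [hβbg, card_clamp_eq_last, Nat.cast_sub hNg]; ring
    | cast j => rw [hβ, card_clamp_eq_castSucc hNg, Nat.cast_one, mul_one]
  set V := Set.range fun σ : Equiv.Perm (Fin Np) =>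
    (1 / Np : ℝ) • (σ.permMatrix ℝ * mergeMatrix fun k : Fin Np => Fin.clamp k Ng)
  have hUhull : U = convexHull ℝ V := by
    rw [hUT, hβcard]
    exact transportPolytope_eq_convexHull ha _
  have hne : (convexHull ℝ V).Nonempty := convexHull_nonempty_iff.2 (Set.range_nonempty _)
  have hcpt : IsCompact (convexHull ℝ V) := (Set.finite_range _).isCompact_convexHull (𝕜 := ℝ)
  have hcvx : Convex ℝ (convexHull ℝ V) := convex_convexHull ℝ V
  refine ⟨hUhull ▸ hne, hUhull ▸ hcpt, hUhull ▸ hcvx, ?_⟩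
  ext P
  constructor
  · intro hP
    have hPV : Matrix.of P ∈ (convexHull ℝ V).extremePoints ℝ := hUhull ▸ hP
    obtain ⟨σ, rfl⟩ := extremePoints_convexHull_subset hPV
    refine ⟨extremePoints_subset hP, fun i j => ?_, σ.symm ∘ Fin.castLE hNg,
      σ.symm.injective.comp (Fin.castLE_injective hNg), fun j i => ?_⟩
    · beta_reduce
      rw [smul_permMatrix_mul_mergeMatrix_apply]
      split_ifs <;> simp
    · beta_reduce
      rw [smul_permMatrix_mul_mergeMatrix_apply, Ne, ite_eq_right_iff, Classical.not_imp,
        clamp_eq_castSucc_iff hNg, Function.comp_apply, Equiv.eq_symm_apply]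
      simp [hNp.ne']
  · rintro ⟨hPU, hP0r, -⟩
    exact hUT ▸ mem_extremePoints_transportPolytope (hUT ▸ hPU) hP0r
end
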